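/- Let Z be a RF on a complete non-atomic probability space satisfying (★), let Z̃ ∈ C[Z], and let Θ̃ be the associated local RF under the tilted measure P̂. Then, with respect to the product measure P̂ ⊗ μ_α on Ω × [1, ∞), almost every (ω, r) satisfies λ({t ∈ T : r ‖Θ̃(t)(ω)‖ > 1}) > 0; that is, the tail RF Ỹ(t) = R Θ̃(t), with R α-Pareto independent of Θ̃, satisfies P(B(Ỹ) > 0) = 1 where B(Y) = ∫_T 1{‖Y(t)‖ > 1} λ(dt). -/

import Mathlib

open MeasureTheory ProbabilityTheory Filter
open scoped ENNReal Topology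

noncomputable section

abbrev Tsp (l : ℕ) : Type := EuclideanSpace ℝ (Fin l)
abbrev Vsp (d : ℕ) : Type := EuclideanSpace ℝ (Fin d)
abbrev RPath (l d : ℕ) : Type := Tsp l → Vsp d

/-- The shift `B^h f = f(· − h)`. -/
def shift {l d : ℕ} (h : Tsp l) (f : RPath l d) : RPath l d := fun t => f (t - h)

def JointlyMeasurable {Ω : Type*} [MeasurableSpace Ω] {l d : ℕ} (Z : Ω → RPath l d) : Prop :=
  Measurable fun p : Ω × Tsp l => Z p.1 p.2

/-- `F ∈ H_β`. -/
def Hom (l d : ℕ) (β : ℝ) (F : RPath l d → ℝ≥0∞) : Prop :=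
  Measurable F ∧
  ∀ c : ℝ, 0 < c → ∀ f : RPath l d,
    F (fun t => c • f t) = ENNReal.ofReal (c ^ β) * F f

/-- Condition (★). -/
def StarC {Ω : Type*} [MeasurableSpace Ω] (P : Measure Ω) {l d : ℕ} (α : ℝ)
    (Z : Ω → RPath l d) : Prop :=
  JointlyMeasurable Z ∧
  (∫⁻ ω, ENNReal.ofReal (‖Z ω 0‖ ^ α) ∂P) = 1 ∧
  ∃ T₀ : Set (Tsp l), T₀.Countable ∧ P {ω | ∃ t ∈ T₀, 0 < ‖Z ω t‖} = 1

/-- `Z̃ ∈ C[Z]`. -/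
def MemC {Ω Ω' : Type*} [MeasurableSpace Ω] [MeasurableSpace Ω']
    (P : Measure Ω) (P' : Measure Ω') {l d : ℕ} (α : ℝ)
    (Z : Ω → RPath l d) (ZT : Ω' → RPath l d) : Prop :=
  StarC P' α ZT ∧
  ∀ F : RPath l d → ℝ≥0∞, Hom l d α F → ∀ h : Tsp l,
    (∫⁻ ω, F (Z ω) ∂P) = ∫⁻ ω', F (shift h (ZT ω')) ∂P'

def Sgam {l d : ℕ} (α : ℝ) (γ : Tsp l → ℝ) (f : RPath l d) : ℝ≥0∞ :=
  ∫⁻ t, ENNReal.ofReal (‖f t‖ ^ α * γ t)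

def Sfun {l d : ℕ} (α : ℝ) (f : RPath l d) : ℝ≥0∞ :=
  ∫⁻ t, ENNReal.ofReal (‖f t‖ ^ α)

/-- The local random field `Θ̃ = Z̃/‖Z̃(0)‖`. -/
def localRF {Ω : Type*} {l d : ℕ} (ZT : Ω → RPath l d) (ω : Ω) : RPath l d :=
  fun t => if ‖ZT ω 0‖ = 0 then 0 else ‖ZT ω 0‖⁻¹ • ZT ω t

/-- The tilted measure `P̂`. -/
def tilted {Ω : Type*} [MeasurableSpace Ω] (P : Measure Ω) {l d : ℕ} (α : ℝ)
    (ZT : Ω → RPath l d) : Measure Ω :=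
  P.withDensity fun ω => ENNReal.ofReal (‖ZT ω 0‖ ^ α)

/-! For `c < 1` consider the `α`-homogeneous functional
`F(f) = ‖f 0‖^α · 1{‖f s‖ ≤ c ‖f 0‖ for all s ∈ S}`, with `S` countable, dense and symmetric.
For a measurable path `f`, `F(B^h f) = 0` for a.e. `h`: by Steinhaus, a set of positive measure
of points where `‖f‖` beats its `S`-translates by the factor `c` would contain two points differing
by some `s ∈ S`, each dominating the other. Integrating `E F(Z) = E F(B^h Z̃)` over `h` therefore
gives `E F(Z̃) = 0` for every such `S`. On the event that `‖Z̃ t‖ ≤ c ‖Z̃ 0‖` for a.e. `t`, almost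
every translate of `S` lies in that region, so averaging over translates shows that the event is
`P̂`-null. Taking `c = 1/r` with `r > 1` gives the claim. -/

lemma measure_setOf_pos_forall_translate_le_eq_zero {G : Type*} [TopologicalSpace G]
    [AddGroup G] [IsTopologicalAddGroup G] [LocallyCompactSpace G] [MeasurableSpace G]
    [BorelSpace G] (μ : Measure G) [μ.IsAddHaarMeasure] [μ.InnerRegular]
    {ι : Type*} [Countable ι] {s : ι → G} (hs : DenseRange s) (hneg : ∀ i, ∃ j, s j = -s i)
    {φ : G → ℝ} (hφ : Measurable φ) {c : ℝ} (hc : c < 1) :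
    μ {t | 0 < φ t ∧ ∀ i, φ (s i + t) ≤ c * φ t} = 0 := by
  set A := {t | 0 < φ t ∧ ∀ i, φ (s i + t) ≤ c * φ t}
  have hA : MeasurableSet A := by
    simp only [A, Set.ofPred_and, Set.ofPred_forall]
    exact (measurableSet_lt measurable_const hφ).inter <| MeasurableSet.iInter fun i =>
      measurableSet_le (hφ.comp (measurable_const_add (s i))) (hφ.const_mul c)
  by_contra hne
  -- Steinhaus: `A - A` is a neighbourhood of `0`, so it contains some `s i`.
  obtain ⟨U, hUA, hU, hU0⟩ := mem_nhds_iff.mp <|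
    μ.sub_mem_nhds_zero_of_addHaar_pos A hA (pos_iff_ne_zero.mpr hne)
  obtain ⟨i, hi⟩ := hs.exists_mem_open hU ⟨0, hU0⟩
  obtain ⟨x, hx, y, hy, hxy⟩ := Set.mem_sub.mp (hUA hi)
  obtain ⟨j, hj⟩ := hneg i
  have hx' : s i + y = x := by rw [← hxy, sub_add_cancel]
  have h₁ : φ x ≤ c * φ y := hx' ▸ hy.2 i
  have h₂ : φ y ≤ c * φ x := by simpa [hj, ← hx'] using hx.2 j
  nlinarith [hx.1, hy.1]

def peakFunctional {ι : Type*} {l d : ℕ} (α c : ℝ) (s : ι → Tsp l) (f : RPath l d) : ℝ≥0∞ :=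
  {f : RPath l d | ∀ i, ‖f (s i)‖ ≤ c * ‖f 0‖}.indicator (fun f => ENNReal.ofReal (‖f 0‖ ^ α)) f

lemma peakFunctional_of_forall_le {ι : Type*} {l d : ℕ} {α c : ℝ} {s : ι → Tsp l}
    {f : RPath l d} (hf : ∀ i, ‖f (s i)‖ ≤ c * ‖f 0‖) :
    peakFunctional α c s f = ENNReal.ofReal (‖f 0‖ ^ α) :=
  Set.indicator_of_mem (s := {f : RPath l d | ∀ i, ‖f (s i)‖ ≤ c * ‖f 0‖}) hf _

lemma hom_peakFunctional {ι : Type*} [Countable ι] {l d : ℕ} (α c : ℝ) (s : ι → Tsp l) :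
    Hom l d α (peakFunctional α c s) := by
  classical
  refine ⟨Measurable.indicator ?_ ?_, fun a ha f => ?_⟩
  · exact ((measurable_pi_apply (0 : Tsp l)).norm.pow_const α).ennreal_ofReal
  · simp only [Set.ofPred_forall]
    exact MeasurableSet.iInter fun i =>
      measurableSet_le (measurable_pi_apply (s i)).norm
        ((measurable_pi_apply 0).norm.const_mul c)
  · have hmem : (∀ i, ‖a • f (s i)‖ ≤ c * ‖a • f 0‖) ↔ ∀ i, ‖f (s i)‖ ≤ c * ‖f 0‖ := by
      simp only [norm_smul, Real.norm_of_nonneg ha.le, mul_left_comm c a,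
        mul_le_mul_iff_right₀ ha]
    simp only [peakFunctional, Set.indicator_apply, Set.mem_ofPred_eq, hmem]
    split_ifs
    · rw [norm_smul, Real.norm_of_nonneg ha.le, Real.mul_rpow ha.le (norm_nonneg _),
        ENNReal.ofReal_mul (by positivity)]
    · rw [mul_zero]

lemma lintegral_peakFunctional_shift_eq_zero {ι : Type*} [Countable ι] {l d : ℕ} {α c : ℝ}
    (hα : 0 < α) (hc : c < 1) {s : ι → Tsp l} (hs : DenseRange s)
    (hneg : ∀ i, ∃ j, s j = -s i) {f : RPath l d} (hf : Measurable f) :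
    ∫⁻ h, peakFunctional α c s (shift h f) = 0 := by
  classical
  have hnull := measure_setOf_pos_forall_translate_le_eq_zero volume hs hneg hf.norm hc
  have hsupp : {h | peakFunctional α c s (shift h f) ≠ 0} ⊆
      Neg.neg ⁻¹' {t | 0 < ‖f t‖ ∧ ∀ i, ‖f (s i + t)‖ ≤ c * ‖f t‖} := by
    intro h hne
    simp only [peakFunctional, shift, Set.indicator_apply, Set.mem_ofPred_eq, zero_sub] at hne ⊢
    split_ifs at hne with hcond
    · refine ⟨(norm_nonneg _).lt_of_ne fun h0 => hne ?_, hcond⟩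
      rw [← h0, Real.zero_rpow hα.ne', ENNReal.ofReal_zero]
    · exact absurd rfl hne
  have hae : ∀ᵐ h, peakFunctional α c s (shift h f) = 0 :=
    ae_iff.mpr <| measure_mono_null hsupp <| (Measure.measure_preimage_neg _ _).trans hnull
  exact (lintegral_congr_ae hae).trans lintegral_zero

@[simp]
lemma shift_zero {l d : ℕ} (f : RPath l d) : shift 0 f = f :=
  funext fun t => congrArg f (sub_zero t)

lemma lintegral_eq_zero_of_lintegral_shift_eq_zero {Ω Ω' : Type*} [MeasurableSpace Ω]
    [MeasurableSpace Ω'] {P : Measure Ω} {P' : Measure Ω'} [SFinite P'] {l d : ℕ} {α : ℝ}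
    {Z : Ω → RPath l d} {ZT : Ω' → RPath l d} (hZT : MemC P P' α Z ZT)
    {F : RPath l d → ℝ≥0∞} (hF : Hom l d α F) (h0 : ∀ ω, ∫⁻ h, F (shift h (ZT ω)) = 0) :
    ∫⁻ ω, F (ZT ω) ∂P' = 0 := by
  have hmeas : Measurable fun p : Ω' × Tsp l => ZT p.1 p.2 := hZT.1.1
  have hshift : Measurable fun p : Tsp l × Ω' => shift p.1 (ZT p.2) :=
    measurable_pi_lambda _ fun t =>
      hmeas.comp (measurable_snd.prodMk (measurable_const.sub measurable_fst))
  -- the expectation of `F ∘ B^h Z̃` does not depend on `h`, but its integral over `h` vanishes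
  have hZ : (∫⁻ ω, F (Z ω) ∂P) * volume (Set.univ : Set (Tsp l)) = 0 := calc
    _ = ∫⁻ h : Tsp l, ∫⁻ ω, F (shift h (ZT ω)) ∂P' := by
      rw [← lintegral_const]
      exact lintegral_congr fun h => hZT.2 F hF h
    _ = ∫⁻ ω, (∫⁻ h, F (shift h (ZT ω))) ∂P' :=
      lintegral_lintegral_swap (f := fun h ω => F (shift h (ZT ω)))
        (hF.1.comp hshift).aemeasurable
    _ = 0 := by simp only [h0, lintegral_zero]
  have hZ0 := (mul_eq_zero.mp hZ).resolve_right (Measure.measure_univ_ne_zero.mpr (NeZero.ne _))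
  simpa only [shift_zero] using (hZT.2 F hF 0).symm.trans hZ0

def symmDenseSeq (l : ℕ) (w : Tsp l) : ℕ ⊕ ℕ → Tsp l :=
  Sum.elim (fun n => TopologicalSpace.denseSeq (Tsp l) n + w)
    (fun n => -(TopologicalSpace.denseSeq (Tsp l) n + w))

lemma denseRange_symmDenseSeq (l : ℕ) (w : Tsp l) : DenseRange (symmDenseSeq l w) := by
  refine Dense.mono ?_ ((Homeomorph.addRight w).surjective.denseRange.comp
    (TopologicalSpace.denseRange_denseSeq (Tsp l)) (Homeomorph.addRight w).continuous)
  rintro _ ⟨n, rfl⟩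
  exact ⟨Sum.inl n, rfl⟩

lemma symmDenseSeq_neg (l : ℕ) (w : Tsp l) (i : ℕ ⊕ ℕ) :
    ∃ j, symmDenseSeq l w j = -symmDenseSeq l w i := by
  rcases i with n | n
  exacts [⟨Sum.inr n, rfl⟩, ⟨Sum.inl n, (neg_neg _).symm⟩]

lemma measurable_symmDenseSeq (l : ℕ) (i : ℕ ⊕ ℕ) : Measurable fun w => symmDenseSeq l w i := by
  rcases i with n | n
  exacts [measurable_const_add _, (measurable_const_add _).neg]

lemma volume_setOf_exists_symmDenseSeq_mem {l : ℕ} {N : Set (Tsp l)} (hN : volume N = 0) :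
    volume {w | ∃ i, symmDenseSeq l w i ∈ N} = 0 := by
  simp only [Set.ofPred_exists]
  refine measure_iUnion_null fun i => ?_
  rcases i with n | n
  · exact (measure_preimage_add _ _ _).trans hN
  · exact (measure_preimage_add _ _ (Neg.neg ⁻¹' N)).trans
      ((Measure.measure_preimage_neg _ _).trans hN)

lemma ofReal_norm_rpow_ne_zero_iff {E : Type*} [NormedAddCommGroup E] {α : ℝ} (hα : 0 < α)
    (x : E) : ENNReal.ofReal (‖x‖ ^ α) ≠ 0 ↔ x ≠ 0 := by
  rw [ne_eq, ENNReal.ofReal_eq_zero, not_le, (Real.rpow_nonneg (norm_nonneg _) α).lt_iff_ne',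
    Real.rpow_ne_zero (norm_nonneg _) hα.ne', norm_ne_zero_iff]

lemma ae_tilted_iff {Ω : Type*} [MeasurableSpace Ω] {P : Measure Ω} {l d : ℕ} {α : ℝ}
    (hα : 0 < α) {ZT : Ω → RPath l d} (hZT : JointlyMeasurable ZT) {p : Ω → Prop} :
    (∀ᵐ ω ∂tilted P α ZT, p ω) ↔ ∀ᵐ ω ∂P, ZT ω 0 ≠ 0 → p ω := by
  have h0 : Measurable fun ω => ZT ω 0 := hZT.comp (measurable_id.prodMk measurable_const)
  rw [tilted, ae_withDensity_iff (h0.norm.pow_const α).ennreal_ofReal]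
  simp only [ofReal_norm_rpow_ne_zero_iff hα]

lemma ae_tilted_volume_pos {Ω Ω' : Type*} [MeasurableSpace Ω] [MeasurableSpace Ω']
    {P : Measure Ω} {P' : Measure Ω'} [SFinite P'] {l d : ℕ} {α : ℝ} (hα : 0 < α)
    {Z : Ω → RPath l d} {ZT : Ω' → RPath l d} (hZT : MemC P P' α Z ZT) {c : ℝ} (hc : c < 1) :
    ∀ᵐ ω ∂tilted P' α ZT, 0 < volume {t | c * ‖ZT ω 0‖ < ‖ZT ω t‖} := by
  have hmeas : Measurable fun p : Ω' × Tsp l => ZT p.1 p.2 := hZT.1.1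
  set G : Tsp l → Ω' → ℝ≥0∞ := fun w ω => peakFunctional α c (symmDenseSeq l w) (ZT ω)
  have hG : Measurable (Function.uncurry G) := by
    have hset : MeasurableSet
        {p : Tsp l × Ω' | ∀ i, ‖ZT p.2 (symmDenseSeq l p.1 i)‖ ≤ c * ‖ZT p.2 0‖} := by
      simp only [Set.ofPred_forall]
      exact MeasurableSet.iInter fun i => measurableSet_le
        (hmeas.comp <| measurable_snd.prodMk <|
          (measurable_symmDenseSeq l i).comp measurable_fst).norm
        ((hmeas.comp (measurable_snd.prodMk measurable_const)).norm.const_mul c)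
    exact Measurable.indicator
      ((hmeas.comp (measurable_snd.prodMk measurable_const)).norm.pow_const α).ennreal_ofReal hset
  have hGw : ∀ w, ∫⁻ ω, G w ω ∂P' = 0 := fun w =>
    lintegral_eq_zero_of_lintegral_shift_eq_zero hZT (hom_peakFunctional α c _) fun ω =>
      lintegral_peakFunctional_shift_eq_zero hα hc (denseRange_symmDenseSeq l w)
        (symmDenseSeq_neg l w) (hmeas.comp measurable_prodMk_left)
  have hGω : ∀ᵐ ω ∂P', ∫⁻ w, G w ω = 0 := by
    have hswap := lintegral_lintegral_swap (hG.aemeasurable (μ := volume.prod P'))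
    simp only [hGw, lintegral_zero] at hswap
    exact (lintegral_eq_zero_iff hG.lintegral_prod_left').mp hswap.symm
  rw [ae_tilted_iff hα hZT.1.1]
  filter_upwards [hGω] with ω hω hω0
  refine pos_iff_ne_zero.mpr fun hnull => ?_
  -- a.e. translate of the dense family misses the null set where `‖Z̃ ω‖` exceeds `c ‖Z̃ ω 0‖`
  have hGfull : ∀ᵐ w, G w ω = ENNReal.ofReal (‖ZT ω 0‖ ^ α) := by
    refine ae_iff.mpr <| measure_mono_null (fun w hw => ?_)
      (volume_setOf_exists_symmDenseSeq_mem hnull)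
    by_contra hmiss
    simp only [Set.mem_ofPred_eq, not_exists, not_lt] at hmiss
    exact hw (peakFunctional_of_forall_le hmiss)
  rw [lintegral_congr_ae hGfull, lintegral_const] at hω
  exact (mul_eq_zero.mp hω).elim ((ofReal_norm_rpow_ne_zero_iff hα _).mpr hω0)
    (Measure.measure_univ_ne_zero.mpr (NeZero.ne _))

lemma setOf_one_lt_mul_norm_localRF {Ω : Type*} {l d : ℕ} {ZT : Ω → RPath l d} {ω : Ω}
    (h0 : ZT ω 0 ≠ 0) {r : ℝ} (hr : 0 < r) :
    {t | 1 < r * ‖localRF ZT ω t‖} = {t | r⁻¹ * ‖ZT ω 0‖ < ‖ZT ω t‖} := by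
  have hpos : 0 < ‖ZT ω 0‖ := norm_pos_iff.mpr h0
  ext t
  simp only [localRF, if_neg hpos.ne', Set.mem_ofPred_eq, norm_smul, norm_inv, norm_norm]
  rw [mul_left_comm, ← div_eq_inv_mul, one_lt_div hpos, inv_mul_lt_iff₀ hr]

theorem stmt3_general {Ω : Type*} [MeasurableSpace Ω] (P : Measure Ω)
    [IsProbabilityMeasure P] {l d : ℕ} (α : ℝ) (hα : 0 < α)
    (Z : Ω → RPath l d) (ZT : Ω → RPath l d) (hZT : MemC P P α Z ZT)
    (μ : Measure ℝ) [IsProbabilityMeasure μ]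
    (hμ : ∀ s : ℝ, 1 ≤ s → μ (Set.Ioi s) = ENNReal.ofReal (s ^ (-α))) :
    ∀ᵐ p ∂((tilted P α ZT).prod μ),
      0 < volume {t : Tsp l | 1 < p.2 * ‖localRF ZT p.1 t‖} := by
  have hR : ∀ᵐ r ∂μ, 1 < r :=
    mem_ae_iff.mpr <| (prob_compl_eq_zero_iff measurableSet_Ioi).mpr <| by
      simpa using hμ 1 le_rfl
  have hΘ : ∀ᵐ ω ∂tilted P α ZT, ZT ω 0 ≠ 0 ∧
      ∀ q : {q : ℚ // (q : ℝ) < 1}, 0 < volume {t | (q : ℝ) * ‖ZT ω 0‖ < ‖ZT ω t‖} :=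
    ((ae_tilted_iff hα hZT.1.1).mpr (.of_forall fun _ h => h)).and
      (ae_all_iff.mpr fun q => ae_tilted_volume_pos hα hZT q.2)
  filter_upwards [Measure.quasiMeasurePreserving_fst.ae hΘ,
    Measure.quasiMeasurePreserving_snd.ae hR] with ⟨ω, r⟩ ⟨hω0, hω⟩ hr
  obtain ⟨q, hrq, hq1⟩ := exists_rat_btwn (inv_lt_one_of_one_lt₀ hr)
  rw [setOf_one_lt_mul_norm_localRF hω0 (zero_lt_one.trans hr)]
  exact (hω ⟨q, hq1⟩).trans_le <| measure_mono fun t ht =>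
    (mul_le_mul_of_nonneg_right hrq.le (norm_nonneg _)).trans_lt ht

/-- the tail RF `Ỹ = RΘ̃` (with `R` α-Pareto, realized on the product
space `(Ω × [1,∞), P̂ ⊗ μ_α)`) satisfies `B(Ỹ) > 0` almost surely. -/
theorem stmt3 {Ω : Type*} [MeasurableSpace Ω] (P : Measure Ω)
    [IsProbabilityMeasure P] (hPc : P.IsComplete) [NullSingletonClass P]
    {l d : ℕ} (hl : 1 ≤ l) (hd : 1 ≤ d) (α : ℝ) (hα : 0 < α)
    (Z : Ω → RPath l d) (hZ : StarC P α Z)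
    (ZT : Ω → RPath l d) (hZT : MemC P P α Z ZT)
    (μ : Measure ℝ) [IsProbabilityMeasure μ]
    (hμ : ∀ s : ℝ, 1 ≤ s → μ (Set.Ioi s) = ENNReal.ofReal (s ^ (-α))) :
    ∀ᵐ p ∂((tilted P α ZT).prod μ),
      0 < volume {t : Tsp l | 1 < p.2 * ‖localRF ZT p.1 t‖} :=
  stmt3_general P α hα Z ZT hZT μ hμ
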